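/- Fix a time query (A,B,t0). Let P and Q be consistent arrival connections at the same station. If for every consistent arrival connection R having Q as a prefix, replacing the prefix Q by P yields a consistent arrival connection R' with arr(R') ≤ arr(R), then P dominates Q. -/

import Mathlib

/-- A timetable: stations, stop events, minimum transfer times, and for each stop
event the (daily, hence time-independent) residence times: between the previous
arrival and the departure of the stop event (`resD`, `none` if the train begins
there) and between the arrival and the next departure (`resA`, `none` if the
train ends there). -/
structure Timetable where
  Station : Type
  StopEvent : Type
  /-- minimum transfer time at a station -/
  transfer : Station → ℕ
  /-- residence time between previous arrival and departure of a stop event -/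
  resD : StopEvent → Option ℕ
  /-- residence time between arrival and next departure of a stop event -/
  resA : StopEvent → Option ℕ

/-- `cycleDiff t t'` is the smallest nonnegative `ℓ` with `ℓ ≡ t' - t (mod 1440)`. -/
def cycleDiff (t t' : ℕ) : ℕ := (t' + 1440 - t) % 1440

/-- An elementary connection `c = (Z1, Z2, S1, S2, t_d, t_a)`. -/
structure EC (T : Timetable) where
  Z1 : T.StopEvent
  Z2 : T.StopEvent
  St1 : T.Station
  St2 : T.Station
  td : ℕ
  ta : ℕ
  htd : td ≤ 1439
  hta : ta ≤ 1439

/-- The length of an elementary connection. -/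
def EC.len {T : Timetable} (c : EC T) : ℕ := cycleDiff c.td c.ta

/-- A leg of a connection: an elementary connection together with its actual
departure and arrival times (minutes from the first day). -/
structure Leg (T : Timetable) where
  c : EC T
  dep : ℤ
  arr : ℤ

/-- A connection: a nonempty sequence of legs. -/
structure Conn (T : Timetable) where
  legs : List (Leg T)
  ne : legs ≠ []

namespace Conn

variable {T : Timetable}

/-- departure time `dep(P) = dep_1(P)` -/
def dep (P : Conn T) : ℤ := (P.legs.head P.ne).dep
/-- arrival time `arr(P) = arr_k(P)` -/
def arr (P : Conn T) : ℤ := (P.legs.getLast P.ne).arr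
/-- departure station -/
def S1 (P : Conn T) : T.Station := (P.legs.head P.ne).c.St1
/-- arrival station -/
def S2 (P : Conn T) : T.Station := (P.legs.getLast P.ne).c.St2
/-- departure stop event -/
def Z1 (P : Conn T) : T.StopEvent := (P.legs.head P.ne).c.Z1
/-- arrival stop event -/
def Z2 (P : Conn T) : T.StopEvent := (P.legs.getLast P.ne).c.Z2

/-- Shift all times of a connection by `t` minutes (e.g. the daily copy of a
daily operating connection, `t = a * 1440`). -/
def shift (P : Conn T) (t : ℤ) : Conn T :=
  ⟨P.legs.map (fun l => ⟨l.c, l.dep + t, l.arr + t⟩), by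
    have := P.ne; simp_all⟩

/-- Concatenation of two connections (the second appended after the first,
keeping all given times). -/
def concat (P Q : Conn T) : Conn T :=
  ⟨P.legs ++ Q.legs, by have := P.ne; simp_all⟩

end Conn

/-- Conditions on a single leg of a consistent connection: the departure time is
nonnegative, agrees with the timetabled departure time modulo 1440, and the
arrival time is the departure time plus the length. -/
def LegOK {T : Timetable} (l : Leg T) : Prop :=
  0 ≤ l.dep ∧ l.dep % 1440 = (l.c.td : ℤ) ∧ l.arr = l.dep + (l.c.len : ℤ)

/-- Conditions on two consecutive legs of a consistent connection: stations
match, and waiting respects the minimum transfer time unless it is the same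
train (same stop event). -/
def AdjOK (T : Timetable) (l l' : Leg T) : Prop :=
  l.c.St2 = l'.c.St1 ∧
  (l'.c.Z1 = l.c.Z2 → l.arr ≤ l'.dep) ∧
  (l'.c.Z1 ≠ l.c.Z2 → l.arr + (T.transfer l.c.St2 : ℤ) ≤ l'.dep)

/-- A connection is consistent. -/
def Consistent (T : Timetable) (P : Conn T) : Prop :=
  (∀ l ∈ P.legs, LegOK l) ∧ P.legs.Chain' (AdjOK T)

/-- `parr(P)`: previous arrival time of the stop event `Z1(P)`, or `none` if the
train begins there. -/
def parr (T : Timetable) (P : Conn T) : Option ℤ :=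
  (T.resD P.Z1).map (fun r => P.dep - (r : ℤ))

/-- `ndep(P)`: next departure time of the stop event `Z2(P)`, or `none` if the
train ends there. -/
def ndep (T : Timetable) (P : Conn T) : Option ℤ :=
  (T.resA P.Z2).map (fun r => P.arr + (r : ℤ))

/-- `P` is a critical departure: `parr(P) ≠ ⊥` and
`dep(P) - parr(P) < transfer(S1(P))`. -/
def CriticalDep (T : Timetable) (P : Conn T) : Prop :=
  ∃ t, parr T P = some t ∧ P.dep - t < (T.transfer P.S1 : ℤ)

/-- `P` is a critical arrival: `ndep(P) ≠ ⊥` and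
`ndep(P) - arr(P) < transfer(S2(P))`. -/
def CriticalArr (T : Timetable) (P : Conn T) : Prop :=
  ∃ t, ndep T P = some t ∧ t - P.arr < (T.transfer P.S2 : ℤ)

/-- Domination between connections. -/
def Dominates (T : Timetable) (P Q : Conn T) : Prop :=
  (P.S1 = Q.S1 ∧ P.S2 = Q.S2) ∧
  (Q.dep ≤ P.dep ∧ P.arr ≤ Q.arr) ∧
  (Q.Z1 = P.Z1 ∨ ¬ CriticalDep T Q ∨
    ∀ t, parr T Q = some t → (T.transfer P.S1 : ℤ) ≤ P.dep - t) ∧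
  (Q.Z2 = P.Z2 ∨ ¬ CriticalArr T Q ∨
    ∀ t, ndep T Q = some t → (T.transfer P.S2 : ℤ) ≤ t - P.arr)

/-- Domination between arrival connections. -/
def ADominates (T : Timetable) (P Q : Conn T) : Prop :=
  P.S2 = Q.S2 ∧ P.arr ≤ Q.arr ∧
  (Q.Z2 = P.Z2 ∨ ¬ CriticalArr T Q ∨
    ∀ t, ndep T Q = some t → (T.transfer P.S2 : ℤ) ≤ t - P.arr)

/-- A consistent arrival connection w.r.t. a time query with departure station
`A` and departure time `t0`: a consistent connection departing from `A` not
before `t0`. -/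
def IsArrConn (T : Timetable) (A : T.Station) (t0 : ℤ) (P : Conn T) : Prop :=
  Consistent T P ∧ P.S1 = A ∧ t0 ≤ P.dep

/-- The connection obtained from a connection `R = pre ++ Q ++ suf` (with `Q` a
subconnection) by replacing `Q` by `P`. -/
def replaced (T : Timetable) (pre suf : List (Leg T)) (P : Conn T) : Conn T :=
  ⟨pre ++ P.legs ++ suf, by have := P.ne; simp_all⟩

section

variable {T : Timetable}

theorem replaced_nil_nil (P : Conn T) : replaced T [] [] P = P := by
  cases P
  simp [replaced]

theorem Conn.S1_replaced_nil (P : Conn T) (suf : List (Leg T)) :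
    (replaced T [] suf P).S1 = P.S1 := by
  simp [replaced, Conn.S1, List.head_append_of_ne_nil P.ne]

theorem Conn.dep_replaced_nil (P : Conn T) (suf : List (Leg T)) :
    (replaced T [] suf P).dep = P.dep := by
  simp [replaced, Conn.dep, List.head_append_of_ne_nil P.ne]

theorem consistent_replaced_nil_singleton_iff (P : Conn T) (l : Leg T) :
    Consistent T (replaced T [] [l] P) ↔
      Consistent T P ∧ LegOK l ∧ AdjOK T (P.legs.getLast P.ne) l := by
  unfold Consistent List.Chain'
  simp only [replaced, List.nil_append, List.mem_append, List.mem_singleton, or_imp, forall_eq',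
    forall_and, forall_eq, List.isChain_append, List.isChain_singleton, true_and,
    List.getLast?_eq_some_getLast P.ne, List.head?_cons, Option.mem_def, Option.some_inj]
  tauto

theorem isArrConn_replaced_nil_singleton_iff {A : T.Station} {t0 : ℤ} (P : Conn T)
    (l : Leg T) :
    IsArrConn T A t0 (replaced T [] [l] P) ↔
      IsArrConn T A t0 P ∧ LegOK l ∧ AdjOK T (P.legs.getLast P.ne) l := by
  simp only [IsArrConn, consistent_replaced_nil_singleton_iff, Conn.S1_replaced_nil,
    Conn.dep_replaced_nil]
  tauto

theorem Conn.arr_nonneg_of_consistent {P : Conn T} (hP : Consistent T P) : 0 ≤ P.arr := by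
  obtain ⟨hdep, -, harr⟩ := hP.1 _ (List.getLast_mem P.ne)
  rw [Conn.arr, harr]
  positivity

theorem Conn.arr_le_of_ndep_eq_some {P : Conn T} {t : ℤ} (ht : ndep T P = some t) :
    P.arr ≤ t := by
  cases hres : T.resA P.Z2 <;> simp [ndep, hres] at ht
  omega

/-- A train of stop event `Z` waiting at station `S` at time `t`, encoded as a leg of
length zero from `S` to `S`. -/
def waitLeg (Z : T.StopEvent) (S : T.Station) (t : ℤ) : Leg T where
  c := { Z1 := Z, Z2 := Z, St1 := S, St2 := S, td := (t % 1440).toNat,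
         ta := (t % 1440).toNat, htd := by omega, hta := by omega }
  dep := t
  arr := t

theorem legOK_waitLeg (Z : T.StopEvent) (S : T.Station) {t : ℤ} (ht : 0 ≤ t) :
    LegOK (waitLeg (T := T) Z S t) := by
  refine ⟨ht, ?_, ?_⟩
  · simp only [waitLeg]
    omega
  · simp [waitLeg, EC.len, cycleDiff]

theorem adjOK_waitLeg_of_arr_le (l : Leg T) {t : ℤ} (ht : l.arr ≤ t) :
    AdjOK T l (waitLeg l.c.Z2 l.c.St2 t) :=
  ⟨rfl, fun _ => ht, fun h => absurd rfl h⟩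

end

theorem replaceable_adominates_general (T : Timetable) (A : T.Station) (t0 : ℤ)
    (P Q : Conn T) (hQ : IsArrConn T A t0 Q)
    (hS : P.S2 = Q.S2)
    (hrep : ∀ suf : List (Leg T),
      IsArrConn T A t0 (replaced T [] suf Q) →
        IsArrConn T A t0 (replaced T [] suf P) ∧
        (replaced T [] suf P).arr ≤ (replaced T [] suf Q).arr) :
    ADominates T P Q := by
  have harr : P.arr ≤ Q.arr := by
    simpa only [replaced_nil_nil] using (hrep [] (by rwa [replaced_nil_nil])).2
  refine ⟨hS, harr, ?_⟩
  by_cases hZ : Q.Z2 = P.Z2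
  · exact Or.inl hZ
  refine Or.inr (Or.inr fun t ht => ?_)
  -- extension of `P` changes trains there, so `P` must reach `S2` a transfer time earlier.
  have hwait := Conn.arr_le_of_ndep_eq_some ht
  have hR := (isArrConn_replaced_nil_singleton_iff Q _).mpr
    ⟨hQ, legOK_waitLeg _ _ ((Conn.arr_nonneg_of_consistent hQ.1).trans hwait),
      adjOK_waitLeg_of_arr_le _ hwait⟩
  obtain ⟨-, -, hadj⟩ := (isArrConn_replaced_nil_singleton_iff P _).mp (hrep _ hR).1
  exact le_sub_iff_add_le'.mpr (hadj.2.2 hZ)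

/-- Fix a time query `(A,B,t0)`. Let `P` and `Q` be consistent
arrival connections at the same station. If for every consistent arrival
connection `R` having `Q` as a prefix, replacing the prefix `Q` by `P` yields a
consistent arrival connection `R'` with `arr(R') ≤ arr(R)`, then `P` dominates
`Q`. -/
theorem replaceable_adominates (T : Timetable) (A B : T.Station) (t0 : ℤ)
    (P Q : Conn T) (hP : IsArrConn T A t0 P) (hQ : IsArrConn T A t0 Q)
    (hS : P.S2 = Q.S2)
    (hrep : ∀ suf : List (Leg T),
      IsArrConn T A t0 (replaced T [] suf Q) →
        IsArrConn T A t0 (replaced T [] suf P) ∧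
        (replaced T [] suf P).arr ≤ (replaced T [] suf Q).arr) :
    ADominates T P Q :=
  replaceable_adominates_general T A t0 P Q hQ hS hrep
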